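/- With ĝ_p and g̃⁺ = g⊗ℂ((t)) ⊕ ℂκ (bracket [a⊗f, b⊗g] = [a,b]⊗fg + ⟨a,b⟩ Res_t(f'g) κ), the linear map ρ₊ sending a(n) ↦ a⊗t^{2n}, a¹(n) ↦ 2∑_{i≥0} (λ_i/4^i) a⊗t^{2n+2i+1}, κ₊ ↦ 2κ, κ₋ ↦ 0 is a Lie algebra homomorphism ρ₊ : ĝ_p → g̃⁺. -/

import Mathlib

open scoped TensorProduct

noncomputable def lam (n : ℕ) : ℂ :=
  (∏ k ∈ Finset.range n, ((1 : ℂ) / 2 - k)) / n.factorial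

/-- Formal derivative d/dt on ℂ((t)). -/
noncomputable def lderiv (F : LaurentSeries ℂ) : LaurentSeries ℂ where
  coeff k := (k + 1 : ℤ) • F.coeff (k + 1)
  isPWO_support' := by
    have h : (Function.support fun k : ℤ => (k + 1 : ℤ) • F.coeff (k + 1)) ⊆
        (fun k : ℤ => k - 1) '' F.support := by
      intro k hk
      simp only [Function.mem_support] at hk
      refine ⟨k + 1, ?_, by ring⟩
      simp only [HahnSeries.mem_support]
      intro h0
      apply hk
      rw [h0, smul_zero]
    exact (F.isPWO_support.image_of_monotone (fun a b hab => by omega)).mono h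

/-- u = 2 ∑_{i≥0} (λ_i/4^i) t^{2i+1} ∈ ℂ((t)), so that
2 ∑_{i≥0} (λ_i/4^i) t^{2n+2i+1} = t^{2n} · u. -/
noncomputable def uPlus : LaurentSeries ℂ :=
  HahnSeries.ofPowerSeries ℤ ℂ
    (PowerSeries.mk fun k => if Odd k then 2 * lam (k / 2) / 4 ^ (k / 2) else 0)

/-- t^{2n} ∈ ℂ((t)). -/
noncomputable def t2 (n : ℤ) : LaurentSeries ℂ := HahnSeries.single (2 * n : ℤ) (1 : ℂ)

/-- The underlying space of g̃⁺ = g ⊗ ℂ((t)) ⊕ ℂκ. -/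
abbrev Gt (L : Type*) [LieRing L] [LieAlgebra ℂ L] : Type _ :=
  (TensorProduct ℂ L (LaurentSeries ℂ)) × ℂ

/-- The bracket of g̃⁺ on pure tensors:
[a⊗f, b⊗g] = [a,b]⊗fg + ⟨a,b⟩ Res_t(f'g) κ, where Res_t is the coefficient
of t⁻¹. -/
noncomputable def pbr {L : Type*} [LieRing L] [LieAlgebra ℂ L]
    (B : LinearMap.BilinForm ℂ L) (a : L) (f : LaurentSeries ℂ)
    (b : L) (g : LaurentSeries ℂ) : Gt L :=
  (⁅a, b⁆ ⊗ₜ[ℂ] (f * g), B a b * (lderiv f * g).coeff (-1))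

/-- ρ₊(a(n)) = a ⊗ t^{2n}. -/
noncomputable def rhoA {L : Type*} [LieRing L] [LieAlgebra ℂ L]
    (a : L) (n : ℤ) : Gt L := (a ⊗ₜ[ℂ] t2 n, 0)

/-- ρ₊(a¹(n)) = 2 ∑_{i≥0} (λ_i/4^i) a ⊗ t^{2n+2i+1} = a ⊗ (t^{2n} u). -/
noncomputable def rhoA1 {L : Type*} [LieRing L] [LieAlgebra ℂ L]
    (a : L) (n : ℤ) : Gt L := (a ⊗ₜ[ℂ] (t2 n * uPlus), 0)

/-- κ as an element of g̃⁺; ρ₊(κ₊) = 2κ, ρ₊(κ₋) = 0. -/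
noncomputable def kap (L : Type*) [LieRing L] [LieAlgebra ℂ L] : Gt L := (0, 1)

/-!
The generating series `u = 2 ∑ λᵢ t^{2i+1} / 4ⁱ = 2t (1 + t²/4)^{1/2} = t √(4 + t²)` satisfies
`u² = 4t² + t⁴` (Vandermonde's identity for the exponents `½ + ½ = 1`), hence `u u' = 4t + 2t³`,
and `u` is odd. Since `ρ₊(a¹(n)) = a ⊗ t^{2n} u`, each bracket reduces to products of these
Laurent polynomials, and each central term to the residue of one of them.
-/

lemma lam_eq_choose (n : ℕ) : lam n = Ring.choose (1 / 2 : ℂ) n := by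
  have h := Ring.descPochhammer_eq_factorial_smul_choose (1 / 2 : ℂ) n
  rw [← Polynomial.aeval_eq_smeval, Polynomial.aeval_def, ← Polynomial.eval_map,
    descPochhammer_map, descPochhammer_eval_eq_prod_range, nsmul_eq_mul] at h
  rw [lam, h, mul_div_cancel_left₀ _ (by exact_mod_cast n.factorial_ne_zero)]

section PowerSeries
open PowerSeries

noncomputable def uSeries : PowerSeries ℂ :=
  C (2 : ℂ) * X * expand 2 two_ne_zero (rescale (4⁻¹ : ℂ) (binomialSeries ℂ (1 / 2 : ℂ)))

lemma coeff_uSeries (k : ℕ) :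
    coeff k uSeries = if Odd k then 2 * lam (k / 2) / 4 ^ (k / 2) else 0 := by
  rcases k with _ | k
  · simp [uSeries]
  · have hodd : Odd (k + 1) ↔ 2 ∣ k := by
      rw [Nat.odd_add_one, Nat.not_odd_iff_even, even_iff_two_dvd]
    rw [uSeries, mul_assoc, coeff_C_mul, coeff_succ_X_mul, coeff_expand]
    simp only [hodd]
    split_ifs with hk
    · obtain ⟨j, rfl⟩ := hk
      rw [show (2 * j + 1) / 2 = j by omega, Nat.mul_div_cancel_left j two_pos, coeff_rescale,
        binomialSeries_coeff, ← lam_eq_choose, smul_eq_mul, mul_one, div_eq_mul_inv, inv_pow]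
      ring
    · rw [mul_zero]

lemma uPlus_eq_ofPowerSeries : uPlus = HahnSeries.ofPowerSeries ℤ ℂ uSeries := by
  rw [uPlus]
  congr 1
  ext k
  rw [coeff_mk, coeff_uSeries]

lemma uSeries_sq : uSeries ^ 2 = 4 * X ^ 2 + X ^ 4 := by
  have hsqrt : rescale (4⁻¹ : ℂ) (binomialSeries ℂ (1 / 2 : ℂ)) ^ 2 = 1 + C (4⁻¹ : ℂ) * X := by
    rw [← map_pow, sq, ← binomialSeries_add, add_halves, ← Nat.cast_one, binomialSeries_nat]
    simp [rescale_X]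
  rw [uSeries, mul_pow, mul_pow, ← map_pow (expand 2 two_ne_zero), hsqrt]
  simp only [map_add, map_one, map_mul, expand_C, expand_X, map_ofNat]
  have h : (4 : ℂ⟦X⟧) * C 4⁻¹ = 1 := by rw [← map_ofNat C, ← map_mul, ← map_one C]; norm_num
  linear_combination X ^ 4 * h

lemma derivative_uSeries_mul_uSeries : d⁄dX ℂ uSeries * uSeries = 4 * X + 2 * X ^ 3 := by
  have h := congrArg (d⁄dX ℂ) uSeries_sq
  have h4 : d⁄dX ℂ (4 : ℂ⟦X⟧) = 0 := by rw [← map_ofNat C 4, derivative_C]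
  simp only [map_add, Derivation.leibniz, Derivation.leibniz_pow, Nat.add_one_sub_one, pow_one,
    derivative_X, smul_eq_mul, mul_one, nsmul_eq_mul, Nat.cast_ofNat, h4, mul_zero, add_zero] at h
  have h2 : (2 : ℂ⟦X⟧) ≠ 0 := by
    rw [← map_ofNat C 2]
    exact (map_ne_zero_iff _ C_injective).mpr two_ne_zero
  apply mul_left_cancel₀ h2
  linear_combination h

end PowerSeries

section LaurentSeries
open HahnSeries

lemma coeff_lderiv (F : LaurentSeries ℂ) (k : ℤ) :
    (lderiv F).coeff k = (k + 1 : ℤ) • F.coeff (k + 1) := rfl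

lemma lderiv_ofPowerSeries (f : PowerSeries ℂ) :
    lderiv (ofPowerSeries ℤ ℂ f) = ofPowerSeries ℤ ℂ (PowerSeries.derivative ℂ f) := by
  ext k
  rw [coeff_lderiv, PowerSeries.coeff_coe, PowerSeries.coeff_coe]
  rcases lt_trichotomy k (-1) with hk | rfl | hk
  · rw [if_pos (by omega), if_pos (by omega), smul_zero]
  · simp
  · obtain ⟨n, rfl⟩ := Int.eq_ofNat_of_zero_le (by omega : 0 ≤ k)
    rw [if_neg (by omega), if_neg (by omega), PowerSeries.coeff_derivative, zsmul_eq_mul,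
      show (n + 1 : ℤ).natAbs = n + 1 by omega, Int.natAbs_natCast]
    push_cast
    ring

lemma lderiv_single (a : ℤ) (r : ℂ) : lderiv (single a r) = single (a - 1) ((a : ℂ) * r) := by
  ext k
  rw [coeff_lderiv, coeff_single, coeff_single]
  by_cases hk : k = a - 1
  · rw [if_pos (by omega), if_pos hk, hk, sub_add_cancel, zsmul_eq_mul]
  · rw [if_neg (by omega), if_neg hk, smul_zero]

lemma lderiv_single_mul (a : ℤ) (r : ℂ) (F : LaurentSeries ℂ) :
    lderiv (single a r * F) = lderiv (single a r) * F + single a r * lderiv F := by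
  ext k
  rw [lderiv_single, coeff_add, coeff_lderiv, coeff_single_mul, coeff_single_mul,
    coeff_single_mul, coeff_lderiv, show k - (a - 1) = k - a + 1 by ring,
    show k + 1 - a = k - a + 1 by ring, zsmul_eq_mul, zsmul_eq_mul]
  push_cast
  ring

lemma t2_mul_t2 (m n : ℤ) : t2 m * t2 n = t2 (m + n) := by
  rw [t2, t2, t2, single_mul_single, mul_one, mul_add]

lemma lderiv_t2 (m : ℤ) : lderiv (t2 m) = single (-1) (2 * m : ℂ) * t2 m := by
  rw [t2, lderiv_single, single_mul_single, show 2 * m - 1 = -1 + 2 * m by ring]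
  push_cast
  ring_nf

lemma coeff_zero_t2 (k : ℤ) : (t2 k).coeff 0 = if k = 0 then 1 else 0 := by
  by_cases hk : k = 0 <;> simp [t2, hk]

lemma coeff_neg_one_single_neg_one_mul (c : ℂ) (F : LaurentSeries ℂ) :
    (single (-1) c * F).coeff (-1) = c * F.coeff 0 := by
  rw [coeff_single_mul, sub_self]

lemma coeff_uPlus_two_mul (k : ℤ) : uPlus.coeff (2 * k) = 0 := by
  have heven : ¬Odd (2 * k).natAbs := by
    rw [Nat.not_odd_iff_even, Int.natAbs_even]
    exact even_two_mul k
  rw [uPlus_eq_ofPowerSeries, PowerSeries.coeff_coe, coeff_uSeries, if_neg heven, ite_self]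

lemma coeff_zero_t2_mul_uPlus (k : ℤ) : (t2 k * uPlus).coeff 0 = 0 := by
  rw [t2, coeff_single_mul, one_mul, show 0 - 2 * k = 2 * (-k) by ring, coeff_uPlus_two_mul]

lemma uPlus_mul_uPlus : uPlus * uPlus = C 4 * t2 1 + t2 2 := by
  rw [uPlus_eq_ofPowerSeries, ← map_mul, ← sq, uSeries_sq]
  simp only [map_add, map_mul, map_pow, map_ofNat, ofPowerSeries_X, single_pow, t2]
  norm_num

lemma lderiv_uPlus_mul_uPlus :
    lderiv uPlus * uPlus = single (-1) 1 * (C 4 * t2 1 + C 2 * t2 2) := by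
  rw [uPlus_eq_ofPowerSeries, lderiv_ofPowerSeries, ← map_mul, derivative_uSeries_mul_uSeries]
  simp only [map_add, map_mul, map_pow, map_ofNat, ofPowerSeries_X, single_pow, t2,
    mul_add, mul_left_comm (single (-1) (1 : ℂ)), single_mul_single]
  norm_num

lemma lderiv_t2_mul (m : ℤ) (F : LaurentSeries ℂ) :
    lderiv (t2 m * F) = single (-1) (2 * m : ℂ) * t2 m * F + t2 m * lderiv F := by
  rw [← lderiv_t2, t2, lderiv_single_mul]

lemma coeff_neg_one_lderiv_t2_mul_t2 (m n : ℤ) :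
    (lderiv (t2 m) * t2 n).coeff (-1) = 2 * m * if m + n = 0 then 1 else 0 := by
  rw [lderiv_t2, mul_assoc, t2_mul_t2, coeff_neg_one_single_neg_one_mul, coeff_zero_t2]

lemma coeff_neg_one_lderiv_t2_mul_t2_mul_uPlus (m n : ℤ) :
    (lderiv (t2 m) * (t2 n * uPlus)).coeff (-1) = 0 := by
  rw [lderiv_t2, mul_assoc, ← mul_assoc (t2 m), t2_mul_t2, coeff_neg_one_single_neg_one_mul,
    coeff_zero_t2_mul_uPlus, mul_zero]

lemma coeff_neg_one_lderiv_t2_mul_uPlus_mul_t2_mul_uPlus (m n : ℤ) :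
    (lderiv (t2 m * uPlus) * (t2 n * uPlus)).coeff (-1) =
      (8 * m + 4) * (if m + n + 1 = 0 then 1 else 0) +
        (2 * m + 2) * (if m + n + 2 = 0 then 1 else 0) := by
  have hexpand : lderiv (t2 m * uPlus) * (t2 n * uPlus) =
      single (-1) (2 * m : ℂ) * (t2 (m + n) * (uPlus * uPlus)) +
        t2 (m + n) * (lderiv uPlus * uPlus) := by
    rw [lderiv_t2_mul, ← t2_mul_t2]
    ring
  rw [hexpand, uPlus_mul_uPlus, lderiv_uPlus_mul_uPlus, mul_left_comm (t2 _), coeff_add,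
    coeff_neg_one_single_neg_one_mul, coeff_neg_one_single_neg_one_mul]
  simp only [mul_add, mul_left_comm (t2 _), t2_mul_t2]
  simp only [coeff_add, C_mul_eq_smul, coeff_smul, coeff_zero_t2, smul_eq_mul]
  ring

end LaurentSeries

section Brackets
variable {L : Type*} [LieRing L] [LieAlgebra ℂ L] (B : LinearMap.BilinForm ℂ L) (a b : L) (m n : ℤ)

lemma pbr_t2_t2 : pbr B a (t2 m) b (t2 n) =
    rhoA ⁅a, b⁆ (m + n) + ((m : ℂ) * B a b * (if m + n = 0 then 1 else 0)) • ((2 : ℂ) • kap L) := by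
  rw [pbr, rhoA, kap, t2_mul_t2, coeff_neg_one_lderiv_t2_mul_t2]
  ext
  · simp only [Prod.fst_add, Prod.smul_fst, smul_zero, add_zero]
  · simp only [Prod.snd_add, Prod.smul_snd, smul_eq_mul]
    ring

lemma pbr_t2_t2_mul_uPlus : pbr B a (t2 m) b (t2 n * uPlus) = rhoA1 ⁅a, b⁆ (m + n) := by
  rw [pbr, rhoA1, coeff_neg_one_lderiv_t2_mul_t2_mul_uPlus, mul_zero, ← mul_assoc, t2_mul_t2]

lemma pbr_t2_mul_uPlus_t2_mul_uPlus : pbr B a (t2 m * uPlus) b (t2 n * uPlus) =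
    (4 : ℂ) • rhoA ⁅a, b⁆ (m + n + 1) + rhoA ⁅a, b⁆ (m + n + 2) +
      (((4 * (m : ℂ) + 2) * (if m + n + 1 = 0 then 1 else 0) +
        ((m : ℂ) + 1) * (if m + n + 2 = 0 then 1 else 0)) * B a b) • ((2 : ℂ) • kap L) := by
  rw [pbr, rhoA, rhoA, kap, coeff_neg_one_lderiv_t2_mul_uPlus_mul_t2_mul_uPlus,
    show t2 m * uPlus * (t2 n * uPlus) = t2 (m + n) * (uPlus * uPlus) by rw [← t2_mul_t2]; ring,
    uPlus_mul_uPlus, mul_add, mul_left_comm, t2_mul_t2, t2_mul_t2, HahnSeries.C_mul_eq_smul]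
  ext
  · simp only [Prod.fst_add, Prod.smul_fst, smul_zero, add_zero, TensorProduct.tmul_add,
      TensorProduct.tmul_smul]
  · simp only [Prod.snd_add, Prod.smul_snd, smul_eq_mul]
    ring

end Brackets

/-- Since `ρ₊(κ₊) = 2κ` and `ρ₊(κ₋) = 0` are central, the brackets of generators determine `ρ₊`. -/
theorem rho_plus_lieHom_general {L : Type*} [LieRing L] [LieAlgebra ℂ L]
    (B : LinearMap.BilinForm ℂ L) :
    ∀ (a b : L) (m n : ℤ),
      -- [a(m), b(n)] = [a,b](m+n) + m⟨a,b⟩δ_{m+n,0}(κ₊+κ₋); κ₊+κ₋ ↦ 2κ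
      pbr B a (t2 m) b (t2 n) =
        rhoA ⁅a, b⁆ (m + n) +
          ((m : ℂ) * B a b * (if m + n = 0 then 1 else 0)) • ((2 : ℂ) • kap L) ∧
      -- [a(m), b¹(n)] = [a,b]¹(m+n) + m⟨a,b⟩ λ_{m+n+1} 4^{m+n+1} κ₋; κ₋ ↦ 0
      pbr B a (t2 m) b (t2 n * uPlus) = rhoA1 ⁅a, b⁆ (m + n) ∧
      -- [a¹(m), b¹(n)] = 4[a,b](m+n+1) + [a,b](m+n+2)
      --   + ((4m+2)δ_{m+n+1,0} + (m+1)δ_{m+n+2,0})⟨a,b⟩(κ₊+κ₋)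
      pbr B a (t2 m * uPlus) b (t2 n * uPlus) =
        (4 : ℂ) • rhoA ⁅a, b⁆ (m + n + 1) + rhoA ⁅a, b⁆ (m + n + 2) +
          (((4 * (m : ℂ) + 2) * (if m + n + 1 = 0 then 1 else 0) +
            ((m : ℂ) + 1) * (if m + n + 2 = 0 then 1 else 0)) * B a b) •
              ((2 : ℂ) • kap L) := by
  intro a b m n
  exact ⟨pbr_t2_t2 B a b m n, pbr_t2_t2_mul_uPlus B a b m n,
    pbr_t2_mul_uPlus_t2_mul_uPlus B a b m n⟩

/-- ρ₊ : ĝ_p → g̃⁺ is a Lie algebra homomorphism: it preserves the defining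
brackets of the three-point affine Lie algebra ĝ_p on generators (the central
elements κ₊ ↦ 2κ, κ₋ ↦ 0 go to central elements, so this determines a
homomorphism by bilinearity). -/
theorem rho_plus_lieHom {L : Type*} [LieRing L] [LieAlgebra ℂ L]
    (B : LinearMap.BilinForm ℂ L)
    (hsym : ∀ x y : L, B x y = B y x)
    (hinv : ∀ x y z : L, B ⁅x, y⁆ z = B x ⁅y, z⁆)
    (hnd : B.Nondegenerate) :
    ∀ (a b : L) (m n : ℤ),
      -- [a(m), b(n)] = [a,b](m+n) + m⟨a,b⟩δ_{m+n,0}(κ₊+κ₋); κ₊+κ₋ ↦ 2κ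
      pbr B a (t2 m) b (t2 n) =
        rhoA ⁅a, b⁆ (m + n) +
          ((m : ℂ) * B a b * (if m + n = 0 then 1 else 0)) • ((2 : ℂ) • kap L) ∧
      -- [a(m), b¹(n)] = [a,b]¹(m+n) + m⟨a,b⟩ λ_{m+n+1} 4^{m+n+1} κ₋; κ₋ ↦ 0
      pbr B a (t2 m) b (t2 n * uPlus) = rhoA1 ⁅a, b⁆ (m + n) ∧
      -- [a¹(m), b¹(n)] = 4[a,b](m+n+1) + [a,b](m+n+2)
      --   + ((4m+2)δ_{m+n+1,0} + (m+1)δ_{m+n+2,0})⟨a,b⟩(κ₊+κ₋)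
      pbr B a (t2 m * uPlus) b (t2 n * uPlus) =
        (4 : ℂ) • rhoA ⁅a, b⁆ (m + n + 1) + rhoA ⁅a, b⁆ (m + n + 2) +
          (((4 * (m : ℂ) + 2) * (if m + n + 1 = 0 then 1 else 0) +
            ((m : ℂ) + 1) * (if m + n + 2 = 0 then 1 else 0)) * B a b) •
              ((2 : ℂ) • kap L) :=
  rho_plus_lieHom_general B
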